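/- arXiv:1612.02500 — 5 statements merged into one kernel-verified Lean document; each statement's English description precedes it below -/
import Mathlib

section
/- Let E be a nonzero real Banach space and S : E ⇉ E* be a multifunction with nonempty graph that is closed, monotone and quasidense. Then S is maximally monotone. -/
/-!
If `z = (x, x*)` lies in a monotone extension of `A`, then `⟨s − x, s* − x*⟩ ≥ 0` for every
`(s, s*) ∈ A`, so the quasidensity expression at `z` dominates `½‖s − x‖² + ½‖s* − x*‖²`.
Quasidensity therefore puts points of `A` arbitrarily close to `z`, and `z ∈ A` because `A`
is closed.
-/

open NormedSpace Filter

/-- A set `A ⊆ X × X*` (the graph of a multifunction `X ⇉ X*`) is monotone: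
`⟨p − q, p* − q*⟩ ≥ 0` for all `(p,p*), (q,q*)` in `A`. -/
def IsMonotoneGraph {X : Type*} [NormedAddCommGroup X] [NormedSpace ℝ X]
    (A : Set (X × StrongDual ℝ X)) : Prop :=
  ∀ p ∈ A, ∀ q ∈ A, 0 ≤ (p.2 - q.2) (p.1 - q.1)

/-- `A` is maximally monotone: monotone and not properly contained in a monotone graph. -/
def IsMaxMonotoneGraph {X : Type*} [NormedAddCommGroup X] [NormedSpace ℝ X]
    (A : Set (X × StrongDual ℝ X)) : Prop :=
  IsMonotoneGraph A ∧ ∀ B : Set (X × StrongDual ℝ X), IsMonotoneGraph B → A ⊆ B → B = A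

/-- `A` is quasidense: for every `(x,x*)`,
`inf_{(s,s*)∈A} [½‖s−x‖² + ½‖s*−x*‖² + ⟨s−x,s*−x*⟩] ≤ 0`. -/
def IsQuasidense {X : Type*} [NormedAddCommGroup X] [NormedSpace ℝ X]
    (A : Set (X × StrongDual ℝ X)) : Prop :=
  ∀ (x : X) (x' : StrongDual ℝ X) (ε : ℝ), 0 < ε → ∃ p ∈ A,
    2⁻¹ * ‖p.1 - x‖ ^ 2 + 2⁻¹ * ‖p.2 - x'‖ ^ 2 + (p.2 - x') (p.1 - x) < ε

/-- The Fitzpatrick function of the graph `A`: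
`φ_A(x,x*) = sup_{(s,s*)∈A} [⟨s,x*⟩ + ⟨x,s*⟩ − ⟨s,s*⟩]`, valued in `(−∞,∞]` (here `EReal`). -/
noncomputable def fitzFn {X : Type*} [NormedAddCommGroup X] [NormedSpace ℝ X]
    (A : Set (X × StrongDual ℝ X)) (p : X × StrongDual ℝ X) : EReal :=
  ⨆ q : A, ((p.2 q.1.1 + q.1.2 p.1 - q.1.2 q.1.1 : ℝ) : EReal)

/-- Fenchel conjugate of a function on `X × X*`, as a function on `X* × X**`, with respect
to the pairing `⟨(x,x*),(y*,y**)⟩ = ⟨x,y*⟩ + ⟨x*,y**⟩`. -/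
noncomputable def pairConj {X : Type*} [NormedAddCommGroup X] [NormedSpace ℝ X]
    (f : X × StrongDual ℝ X → EReal) (q : StrongDual ℝ X × StrongDual ℝ (StrongDual ℝ X)) : EReal :=
  ⨆ p : X × StrongDual ℝ X, (((q.1 p.1 + q.2 p.2 : ℝ) : EReal) - f p)

/-- Graph of the Fitzpatrick extension `S^𝔽 : X* ⇉ X**` of a multifunction with graph `A`:
`(y*,y**) ∈ G(S^𝔽)` iff `φ_A*(y*,y**) = ⟨y*,y**⟩`. -/
noncomputable def fitzExtGraph {X : Type*} [NormedAddCommGroup X] [NormedSpace ℝ X]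
    (A : Set (X × StrongDual ℝ X)) : Set (StrongDual ℝ X × StrongDual ℝ (StrongDual ℝ X)) :=
  {q | pairConj (fitzFn A) q = ((q.2 q.1 : ℝ) : EReal)}

/-- Fenchel conjugate of `f : X → (−∞,∞]`: `f*(x*) = sup_x [⟨x,x*⟩ − f(x)]`. -/
noncomputable def fnConj {X : Type*} [NormedAddCommGroup X] [NormedSpace ℝ X]
    (f : X → EReal) (x' : StrongDual ℝ X) : EReal :=
  ⨆ x : X, (((x' x : ℝ) : EReal) - f x)

/-- Graph of the subdifferential of `f`: `x* ∈ ∂f(x)` iff `f(x) + f*(x*) = ⟨x,x*⟩`. -/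
noncomputable def subdiffGraph {X : Type*} [NormedAddCommGroup X] [NormedSpace ℝ X]
    (f : X → EReal) : Set (X × StrongDual ℝ X) :=
  {p | f p.1 + fnConj f p.2 = ((p.2 p.1 : ℝ) : EReal)}

/-- Convexity for `(−∞,∞]`-valued functions. -/
def ERealConvexOn {X : Type*} [AddCommGroup X] [Module ℝ X] (f : X → EReal) : Prop :=
  ∀ x y : X, ∀ a b : ℝ, 0 ≤ a → 0 ≤ b → a + b = 1 →
    f (a • x + b • y) ≤ (a : EReal) * f x + (b : EReal) * f y

/-- `f` is proper: never `−∞` and somewhere finite. -/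
def ERealProper {X : Type*} (f : X → EReal) : Prop :=
  (∀ x, f x ≠ ⊥) ∧ (∃ x, f x ≠ ⊤)

/-- Domain of a multifunction given by its graph. -/
def graphDomain {X Y : Type*} (A : Set (X × Y)) : Set X := {x | ∃ y, (x, y) ∈ A}

/-- Range of a multifunction given by its graph. -/
def graphRange {X Y : Type*} (A : Set (X × Y)) : Set Y := {y | ∃ x, (x, y) ∈ A}

/-- Graph of the sum of two multifunctions: `(S+T)(x) = S(x) + T(x)`. -/
def sumGraph {X Y : Type*} [Add Y] (A B : Set (X × Y)) : Set (X × Y) :=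
  {p | ∃ u v, (p.1, u) ∈ A ∧ (p.1, v) ∈ B ∧ p.2 = u + v}

section

variable {X : Type*} [NormedAddCommGroup X] [NormedSpace ℝ X]

def IsMonotonicallyRelated (A : Set (X × StrongDual ℝ X)) (z : X × StrongDual ℝ X) : Prop :=
  ∀ p ∈ A, 0 ≤ (p.2 - z.2) (p.1 - z.1)

theorem IsMonotoneGraph.isMonotonicallyRelated_of_subset {A B : Set (X × StrongDual ℝ X)}
    (hB : IsMonotoneGraph B) (hAB : A ⊆ B) {z : X × StrongDual ℝ X} (hz : z ∈ B) :
    IsMonotonicallyRelated A z :=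
  fun p hp => hB p (hAB hp) z hz

theorem IsQuasidense.mem_closure_of_isMonotonicallyRelated {A : Set (X × StrongDual ℝ X)}
    (hA : IsQuasidense A) {z : X × StrongDual ℝ X} (hz : IsMonotonicallyRelated A z) :
    z ∈ closure A := by
  rw [Metric.mem_closure_iff]
  intro ε hε
  obtain ⟨p, hpA, hp⟩ := hA z.1 z.2 (ε ^ 2 / 2) (by positivity)
  have hsq : ‖p.1 - z.1‖ ^ 2 + ‖p.2 - z.2‖ ^ 2 < ε ^ 2 := by nlinarith [hz p hpA]
  refine ⟨p, hpA, ?_⟩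
  rw [Prod.dist_eq, max_lt_iff, dist_comm, dist_eq_norm, dist_comm z.2, dist_eq_norm]
  exact ⟨lt_of_pow_lt_pow_left₀ 2 hε.le (by nlinarith [sq_nonneg ‖p.2 - z.2‖]),
    lt_of_pow_lt_pow_left₀ 2 hε.le (by nlinarith [sq_nonneg ‖p.1 - z.1‖])⟩

end

theorem quasidense_isMaxMonotone_general
    {E : Type*} [NormedAddCommGroup E] [NormedSpace ℝ E]
    (A : Set (E × StrongDual ℝ E))
    (hcl : IsClosed A) (hmono : IsMonotoneGraph A) (hqd : IsQuasidense A) :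
    IsMaxMonotoneGraph A := by
  refine ⟨hmono, fun B hB hAB => Set.Subset.antisymm (fun z hz => ?_) hAB⟩
  have hrel : IsMonotonicallyRelated A z := hB.isMonotonicallyRelated_of_subset hAB hz
  exact hcl.closure_subset (hqd.mem_closure_of_isMonotonicallyRelated hrel)

/-- Every closed, monotone, quasidense multifunction from a nonzero real
Banach space into its dual is maximally monotone. -/
theorem quasidense_isMaxMonotone
    {E : Type*} [NormedAddCommGroup E] [NormedSpace ℝ E] [CompleteSpace E] [Nontrivial E]
    (A : Set (E × StrongDual ℝ E)) (hne : A.Nonempty)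
    (hcl : IsClosed A) (hmono : IsMonotoneGraph A) (hqd : IsQuasidense A) :
    IsMaxMonotoneGraph A :=
  quasidense_isMaxMonotone_general A hcl hmono hqd
end

section
/- Let E be a nonzero real Banach space and S : E ⇉ E* be closed, monotone and quasidense. Then for all (x,x*) ∈ E × E*, φ_S(x,x*) ≥ ⟨x,x*⟩, and {(x,x*) ∈ E × E* : φ_S(x,x*) = ⟨x,x*⟩} = G(S). -/
open NormedSpace Filter

/-!
Writing the Fitzpatrick integrand as `⟨x,x*⟩ − ⟨s − x, s* − x*⟩`, quasidensity supplies points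
`(s,s*) ∈ G(S)` with `⟨s − x, s* − x*⟩` arbitrarily close to `0` from below, so `φ_S ≥ ⟨·,·⟩`.
Equality at `(x,x*)` means that `(x,x*)` is monotonically related to `G(S)`; then those same points
also have `‖s − x‖` and `‖s* − x*‖` small, so `(x,x*)` lies in the closure of `G(S)`. Conversely,
monotonicity of `G(S)` gives equality on `G(S)`.
-/

section Fitzpatrick

variable {X : Type*} [NormedAddCommGroup X] [NormedSpace ℝ X] {A : Set (X × StrongDual ℝ X)}

lemma fitzpatrick_integrand_eq (p q : X × StrongDual ℝ X) :
    p.2 q.1 + q.2 p.1 - q.2 q.1 = p.2 p.1 - (q.2 - p.2) (q.1 - p.1) := by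
  simp only [sub_apply, map_sub]
  ring

lemma le_fitzFn_of_mem {q : X × StrongDual ℝ X} (hq : q ∈ A) (p : X × StrongDual ℝ X) :
    ((p.2 p.1 - (q.2 - p.2) (q.1 - p.1) : ℝ) : EReal) ≤ fitzFn A p := by
  rw [← fitzpatrick_integrand_eq]
  exact le_iSup (fun r : A => ((p.2 r.1.1 + r.1.2 p.1 - r.1.2 r.1.1 : ℝ) : EReal)) ⟨q, hq⟩

lemma fitzFn_le_pairing_iff {p : X × StrongDual ℝ X} :
    fitzFn A p ≤ ((p.2 p.1 : ℝ) : EReal) ↔ ∀ q ∈ A, 0 ≤ (q.2 - p.2) (q.1 - p.1) := by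
  refine ⟨fun h q hq => ?_, fun h => iSup_le fun q => ?_⟩
  · have := EReal.coe_le_coe_iff.mp ((le_fitzFn_of_mem hq p).trans h)
    linarith
  · rw [EReal.coe_le_coe_iff, fitzpatrick_integrand_eq]
    linarith [h q.1 q.2]

lemma IsMonotoneGraph.fitzFn_le_pairing_of_mem (hmono : IsMonotoneGraph A)
    {p : X × StrongDual ℝ X} (hp : p ∈ A) : fitzFn A p ≤ ((p.2 p.1 : ℝ) : EReal) :=
  fitzFn_le_pairing_iff.2 fun q hq => hmono q hq p hp

lemma IsQuasidense.pairing_le_fitzFn (hqd : IsQuasidense A) (p : X × StrongDual ℝ X) :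
    ((p.2 p.1 : ℝ) : EReal) ≤ fitzFn A p := by
  refine EReal.ge_of_forall_gt_iff_ge.1 fun r hr => ?_
  obtain ⟨q, hq, hlt⟩ := hqd p.1 p.2 (p.2 p.1 - r) (by linarith [EReal.coe_lt_coe_iff.mp hr])
  have hnorms : 0 ≤ 2⁻¹ * ‖q.1 - p.1‖ ^ 2 + 2⁻¹ * ‖q.2 - p.2‖ ^ 2 := by positivity
  exact le_trans (EReal.coe_le_coe_iff.mpr (by linarith)) (le_fitzFn_of_mem hq p)

lemma IsQuasidense.mem_closure_of_monotonicallyRelated (hqd : IsQuasidense A)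
    {p : X × StrongDual ℝ X} (hp : ∀ q ∈ A, 0 ≤ (q.2 - p.2) (q.1 - p.1)) : p ∈ closure A := by
  refine Metric.mem_closure_iff.2 fun ε hε => ?_
  obtain ⟨q, hq, hlt⟩ := hqd p.1 p.2 (ε ^ 2 / 2) (by positivity)
  have hpq := hp q hq
  have h₁ : ‖q.1 - p.1‖ ^ 2 < ε ^ 2 := by nlinarith [sq_nonneg ‖q.2 - p.2‖]
  have h₂ : ‖q.2 - p.2‖ ^ 2 < ε ^ 2 := by nlinarith [sq_nonneg ‖q.1 - p.1‖]
  refine ⟨q, hq, max_lt ?_ ?_⟩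
  · rw [dist_comm, dist_eq_norm]
    exact lt_of_pow_lt_pow_left₀ 2 hε.le h₁
  · rw [dist_comm, dist_eq_norm]
    exact lt_of_pow_lt_pow_left₀ 2 hε.le h₂

end Fitzpatrick

theorem fitzFn_ge_pairing_and_eq_iff_mem_general
    {E : Type*} [NormedAddCommGroup E] [NormedSpace ℝ E]
    (A : Set (E × StrongDual ℝ E))
    (hcl : IsClosed A) (hmono : IsMonotoneGraph A) (hqd : IsQuasidense A) :
    (∀ p : E × StrongDual ℝ E, ((p.2 p.1 : ℝ) : EReal) ≤ fitzFn A p) ∧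
      {p : E × StrongDual ℝ E | fitzFn A p = ((p.2 p.1 : ℝ) : EReal)} = A := by
  refine ⟨hqd.pairing_le_fitzFn, Set.Subset.antisymm (fun p hp => ?_) (fun p hp => ?_)⟩
  · exact hcl.closure_subset
      (hqd.mem_closure_of_monotonicallyRelated (fitzFn_le_pairing_iff.1 (le_of_eq hp)))
  · exact le_antisymm (hmono.fitzFn_le_pairing_of_mem hp) (hqd.pairing_le_fitzFn p)

/-- For a closed, monotone, quasidense `S`, the Fitzpatrick function satisfies
`φ_S ≥ ⟨·,·⟩` everywhere, with equality exactly on `G(S)`. -/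
theorem fitzFn_ge_pairing_and_eq_iff_mem
    {E : Type*} [NormedAddCommGroup E] [NormedSpace ℝ E] [CompleteSpace E] [Nontrivial E]
    (A : Set (E × StrongDual ℝ E)) (hne : A.Nonempty)
    (hcl : IsClosed A) (hmono : IsMonotoneGraph A) (hqd : IsQuasidense A) :
    (∀ p : E × StrongDual ℝ E, ((p.2 p.1 : ℝ) : EReal) ≤ fitzFn A p) ∧
      {p : E × StrongDual ℝ E | fitzFn A p = ((p.2 p.1 : ℝ) : EReal)} = A :=
  fitzFn_ge_pairing_and_eq_iff_mem_general A hcl hmono hqd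
end

section
/- Let E be a nonzero real Banach space, g : E → (−∞,∞] be proper, convex and lower semicontinuous, and ε > 0. Then there exists (s,s*) ∈ G(∂g) such that ½‖s‖² + ⟨s,s*⟩ + ½‖s*‖² < ε. -/
open NormedSpace Filter

/-! Since `g` has a continuous affine minorant (Hahn–Banach applied to its closed convex epigraph),
`g + ½‖·‖²` is bounded below and coercive, so Ekeland's principle gives, for every `δ > 0`, a
point `s` minimising `g + ½‖·‖² + δ‖· - s‖`, with `‖s‖` bounded independently of `δ`. Separating
the epigraph of `g` from the hypograph of the perturbation yields `s* ∈ ∂g(s)` such that `-s*` is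
a subgradient of `½‖·‖² + δ‖· - s‖` at `s`; this forces `‖s*‖ ≤ ‖s‖ + δ` and
`⟨s, s*⟩ ≤ δ‖s‖ - ‖s‖²`, hence `½‖s‖² + ⟨s, s*⟩ + ½‖s*‖² ≤ 2δ‖s‖ + δ²/2`. -/

open Topology

theorem LowerSemicontinuous.add_coe_real {X : Type*} [TopologicalSpace X] {f : X → EReal}
    (hf : LowerSemicontinuous f) {φ : X → ℝ} (hφ : Continuous φ) :
    LowerSemicontinuous fun x => f x + (φ x : EReal) :=
  hf.add' (continuous_coe_real_ereal.comp hφ).lowerSemicontinuous fun _ =>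
    EReal.continuousAt_add (Or.inr (EReal.coe_ne_bot _)) (Or.inr (EReal.coe_ne_top _))

theorem EReal.exists_le_add_of_forall_coe_le {ι : Type*} {S : Set ι} (hS : S.Nonempty)
    {f : ι → EReal} {B : ℝ} (hB : ∀ z ∈ S, (B : EReal) ≤ f z) {η : ℝ} (hη : 0 < η) :
    ∃ y ∈ S, ∀ z ∈ S, f y ≤ f z + η := by
  set I := ⨅ z ∈ S, f z with hI
  have hIbot : I ≠ ⊥ := ne_bot_of_le_ne_bot (EReal.coe_ne_bot B) (le_iInf₂ hB)
  rcases eq_or_ne I ⊤ with hItop | hItop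
  · obtain ⟨y, hy⟩ := hS
    refine ⟨y, hy, fun z hz => ?_⟩
    have : f z = ⊤ := top_le_iff.1 (hItop ▸ iInf₂_le z hz)
    simp [this]
  · obtain ⟨r, hr⟩ : ∃ r : ℝ, I = r := ⟨I.toReal, (EReal.coe_toReal hItop hIbot).symm⟩
    have : I < ((r + η : ℝ) : EReal) := by rw [hr]; exact_mod_cast lt_add_of_pos_right r hη
    obtain ⟨y, hy, hyr⟩ : ∃ y ∈ S, f y < ((r + η : ℝ) : EReal) := by
      rw [hI] at this
      simpa only [iInf_lt_iff, exists_prop] using this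
    refine ⟨y, hy, fun z hz => hyr.le.trans ?_⟩
    rw [EReal.coe_add]
    exact add_le_add_left (hr ▸ iInf₂_le (f := fun z _ => f z) z hz) _

section Ekeland

variable {X : Type*} [MetricSpace X] {f : X → EReal} {ε : ℝ}

def ekelandSet (f : X → EReal) (ε : ℝ) (x : X) : Set X :=
  {y | f y + ((ε * dist y x : ℝ) : EReal) ≤ f x}

theorem self_mem_ekelandSet (x : X) : x ∈ ekelandSet f ε x := by
  simp [ekelandSet]

theorem le_of_mem_ekelandSet (hε : 0 ≤ ε) {x y : X} (hy : y ∈ ekelandSet f ε x) : f y ≤ f x :=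
  le_trans (le_add_of_nonneg_right (by exact_mod_cast mul_nonneg hε dist_nonneg)) hy

theorem ekelandSet_subset (hε : 0 ≤ ε) {x y : X} (hy : y ∈ ekelandSet f ε x) :
    ekelandSet f ε y ⊆ ekelandSet f ε x := fun z hz =>
  calc f z + ((ε * dist z x : ℝ) : EReal)
      ≤ f z + ((ε * dist z y : ℝ) : EReal) + ((ε * dist y x : ℝ) : EReal) := by
        rw [add_assoc, ← EReal.coe_add, ← mul_add]
        gcongr
        exact dist_triangle z y x
    _ ≤ f y + ((ε * dist y x : ℝ) : EReal) := by gcongr; exact hz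
    _ ≤ f x := hy

theorem isClosed_ekelandSet (hf : LowerSemicontinuous f) (ε : ℝ) (x : X) :
    IsClosed (ekelandSet f ε x) :=
  (hf.add_coe_real (continuous_const.mul (continuous_id.dist continuous_const))).isClosed_preimage
    (f x)

theorem dist_le_of_mem_ekelandSet (hε : 0 < ε) {x y : X} (hy : y ∈ ekelandSet f ε x)
    (hx : f x ≠ ⊤) (hybot : f y ≠ ⊥) {η : ℝ} (hxy : f x ≤ f y + η) : dist y x ≤ η / ε := by
  have hytop : f y ≠ ⊤ := ne_top_of_le_ne_top hx (le_of_mem_ekelandSet hε.le hy)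
  lift f y to ℝ using ⟨hytop, hybot⟩ with r hr
  rw [le_div_iff₀' hε]
  have := hy.trans hxy
  rw [← hr] at this
  exact_mod_cast (add_le_add_iff_left r).1 (by exact_mod_cast this)

theorem LowerSemicontinuous.exists_ekeland [CompleteSpace X] (hf : LowerSemicontinuous f)
    {B : ℝ} (hB : ∀ x, (B : EReal) ≤ f x) {x₀ : X} (hx₀ : f x₀ ≠ ⊤) (hε : 0 < ε) :
    ∃ s, f s ≤ f x₀ ∧ ∀ x, f s ≤ f x + ((ε * dist x s : ℝ) : EReal) := by
  have hstep (n : ℕ) (x : X) : ∃ y ∈ ekelandSet f ε x, ∀ z ∈ ekelandSet f ε x,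
      f y ≤ f z + ((ε * (1 / (n + 1)) : ℝ) : EReal) :=
    EReal.exists_le_add_of_forall_coe_le ⟨x, self_mem_ekelandSet x⟩ (fun z _ => hB z)
      (by positivity)
  choose next hnext_mem hnext_le using hstep
  let seq : ℕ → X := fun n => Nat.rec x₀ next n
  let S : ℕ → Set X := fun n => ekelandSet f ε (seq (n + 1))
  have hS_anti : Antitone S :=
    antitone_nat_of_succ_le fun n => ekelandSet_subset hε.le (hnext_mem _ _)
  have hS_sub (n : ℕ) : S n ⊆ ekelandSet f ε x₀ := by
    induction n with
    | zero => exact ekelandSet_subset hε.le (hnext_mem _ _)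
    | succ n ih => exact (hS_anti n.le_succ).trans ih
  have hS_ball (n : ℕ) : S n ⊆ Metric.closedBall (seq (n + 1)) (1 / (n + 1)) := by
    intro y hy
    have hfin : f (seq (n + 1)) ≠ ⊤ := ne_top_of_le_ne_top hx₀
      (le_of_mem_ekelandSet hε.le (hS_sub n (self_mem_ekelandSet _)))
    have := dist_le_of_mem_ekelandSet hε hy hfin
      (ne_bot_of_le_ne_bot (EReal.coe_ne_bot B) (hB y))
      (hnext_le n (seq n) y (ekelandSet_subset hε.le (hnext_mem _ _) hy))
    rwa [mul_div_cancel_left₀ _ hε.ne'] at this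
  have hdiam_le (n : ℕ) : Metric.diam (S n) ≤ 2 * (1 / (n + 1)) :=
    Metric.diam_le_of_subset_closedBall (by positivity) (hS_ball n)
  have hdiam : Tendsto (fun n => Metric.diam (S n)) atTop (𝓝 0) :=
    squeeze_zero (fun _ => Metric.diam_nonneg) hdiam_le
      (by simpa using tendsto_one_div_add_atTop_nhds_zero_nat.const_mul (2 : ℝ))
  obtain ⟨s, hs⟩ := Metric.nonempty_iInter_of_nonempty_biInter
    (fun n => isClosed_ekelandSet hf ε _)
    (fun n => Metric.isBounded_closedBall.subset (hS_ball n))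
    (fun N => ⟨seq (N + 1), Set.mem_iInter₂.2 fun n hn => hS_anti hn (self_mem_ekelandSet _)⟩)
    hdiam
  rw [Set.mem_iInter] at hs
  refine ⟨s, le_of_mem_ekelandSet hε.le (hS_sub 0 (hs 0)), fun x => ?_⟩
  by_contra! hlt
  -- `x` would lie in every `S n`, whose diameters shrink to `0`, so `x = s`.
  have hx (n : ℕ) : x ∈ S n := ekelandSet_subset hε.le (hs n) hlt.le
  have hxs : dist x s ≤ 0 :=
    ge_of_tendsto' hdiam fun n => Metric.dist_le_diam_of_mem
      (Metric.isBounded_closedBall.subset (hS_ball n)) (hx n) (hs n)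
  rw [dist_le_zero.1 hxs] at hlt
  simp at hlt

end Ekeland

section Epigraph

variable {E : Type*} {g : E → EReal}

theorem ERealConvexOn.convex_epigraph [AddCommGroup E] [Module ℝ E] (hg : ERealConvexOn g) :
    Convex ℝ {p : E × ℝ | g p.1 ≤ p.2} := by
  rintro ⟨x, t⟩ hx ⟨y, u⟩ hy a b ha hb hab
  calc g (a • x + b • y) ≤ (a : EReal) * g x + (b : EReal) * g y := hg x y a b ha hb hab
    _ ≤ (a : EReal) * t + (b : EReal) * u :=
      add_le_add (mul_le_mul_of_nonneg_left hx (by exact_mod_cast ha))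
        (mul_le_mul_of_nonneg_left hy (by exact_mod_cast hb))
    _ = ((a * t + b * u : ℝ) : EReal) := by norm_cast

theorem LowerSemicontinuous.isClosed_real_epigraph [TopologicalSpace E]
    (hg : LowerSemicontinuous g) : IsClosed {p : E × ℝ | g p.1 ≤ p.2} :=
  (lowerSemicontinuous_iff_isClosed_epigraph.1 hg).preimage
    (continuous_fst.prodMk (continuous_coe_real_ereal.comp continuous_snd))

theorem ContinuousLinearMap.apply_prod_real [AddCommGroup E] [Module ℝ E] [TopologicalSpace E]
    (f : E × ℝ →L[ℝ] ℝ) (x : E) (t : ℝ) : f (x, t) = f (x, 0) + t * f (0, 1) := by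
  rw [← smul_eq_mul, ← map_smul, ← map_add]
  simp

theorem coe_le_of_forall_mem_epigraph_le [AddCommGroup E] [Module ℝ E] [TopologicalSpace E]
    (hbot : ∀ x, g x ≠ ⊥) (f : E × ℝ →L[ℝ] ℝ) {u : ℝ} (hr : 0 < f (0, 1))
    (hu : ∀ p ∈ {p : E × ℝ | g p.1 ≤ p.2}, u ≤ f p) (x : E) :
    (((u - f (x, 0)) / f (0, 1) : ℝ) : EReal) ≤ g x := by
  rcases eq_or_ne (g x) ⊤ with htop | htop
  · simp [htop]
  lift g x to ℝ using ⟨htop, hbot x⟩ with t ht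
  have := hu (x, t) ht.ge
  rw [f.apply_prod_real] at this
  exact_mod_cast (div_le_iff₀ hr).2 (by linarith)

end Epigraph

theorem le_of_forall_pos_mul_le_add_sq {a b c : ℝ}
    (h : ∀ t : ℝ, 0 < t → t * a ≤ t * b + t ^ 2 * c) : a ≤ b := by
  have hle (t : ℝ) (ht : 0 < t) : a ≤ b + t * c :=
    le_of_mul_le_mul_left (by linarith [h t ht]) ht
  have hlim : Tendsto (fun t : ℝ => b + t * c) (𝓝[>] 0) (𝓝 b) :=
    (Continuous.tendsto' (f := fun t : ℝ => b + t * c) (by fun_prop) 0 b (by simp)).mono_left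
      nhdsWithin_le_nhds
  exact ge_of_tendsto hlim (eventually_nhdsWithin_of_forall hle)

theorem ContinuousLinearMap.opNorm_le_of_le_add_sq {E : Type*} [NormedAddCommGroup E]
    [NormedSpace ℝ E] (L : StrongDual ℝ E) {a b : ℝ} (ha : 0 ≤ a)
    (h : ∀ v, L v ≤ a * ‖v‖ + b * ‖v‖ ^ 2) : ‖L‖ ≤ a := by
  have hle (v : E) : L v ≤ a * ‖v‖ :=
    le_of_forall_pos_mul_le_add_sq (c := b * ‖v‖ ^ 2) fun t ht => by
      have := h (t • v)
      rw [map_smul, smul_eq_mul, norm_smul, Real.norm_of_nonneg ht.le] at this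
      linear_combination this
  refine L.opNorm_le_bound ha fun v => abs_le.2 ⟨?_, hle v⟩
  have := hle (-v)
  rw [map_neg, norm_neg] at this
  linarith

section Subdifferential

variable {E : Type*} [NormedAddCommGroup E] [NormedSpace ℝ E] {g : E → EReal}

theorem mem_subdiffGraph_of_forall_le {s : E} {L : StrongDual ℝ E} {γ : ℝ} (hs : g s = γ)
    (h : ∀ x, ((γ + L (x - s) : ℝ) : EReal) ≤ g x) : (s, L) ∈ subdiffGraph g := by
  have hconj : fnConj g L = ((L s - γ : ℝ) : EReal) := by
    refine le_antisymm (iSup_le fun x => EReal.sub_le_of_le_add ?_) ?_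
    · calc ((L x : ℝ) : EReal) = ((L s - γ : ℝ) : EReal) + ((γ + L (x - s) : ℝ) : EReal) := by
            rw [map_sub, ← EReal.coe_add]; ring_nf
        _ ≤ ((L s - γ : ℝ) : EReal) + g x := by gcongr; exact h x
    · calc ((L s - γ : ℝ) : EReal) = ((L s : ℝ) : EReal) - g s := by rw [hs]; rfl
        _ ≤ fnConj g L := le_iSup (fun x => ((L x : ℝ) : EReal) - g x) s
  show g s + fnConj g L = ((L s : ℝ) : EReal)
  rw [hs, hconj, ← EReal.coe_add]
  ring_nf

theorem ERealConvexOn.exists_affine_le (hconv : ERealConvexOn g) (hlsc : LowerSemicontinuous g)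
    (hproper : ERealProper g) :
    ∃ (ℓ : StrongDual ℝ E) (c : ℝ), ∀ x, ((ℓ x + c : ℝ) : EReal) ≤ g x := by
  obtain ⟨hbot, x₁, hx₁⟩ := hproper
  lift g x₁ to ℝ using ⟨hx₁, hbot x₁⟩ with γ hγ
  obtain ⟨f, u, hfu, hf⟩ := geometric_hahn_banach_point_closed hconv.convex_epigraph
    hlsc.isClosed_real_epigraph (x := (x₁, γ - 1))
    (by simpa only [Set.mem_ofPred_eq, ← hγ, not_le] using EReal.coe_lt_coe (sub_one_lt γ))
  have hr : 0 < f (0, 1) := by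
    have := hf (x₁, γ) hγ.ge
    rw [f.apply_prod_real] at this hfu
    linarith
  refine ⟨-(f (0, 1))⁻¹ • f.comp (.inl ℝ E ℝ), u / f (0, 1), fun x => ?_⟩
  convert coe_le_of_forall_mem_epigraph_le hbot f hr (fun p hp => (hf p hp).le) x using 2
  simp only [smul_apply, ContinuousLinearMap.comp_apply, ContinuousLinearMap.inl_apply, smul_eq_mul,
    neg_mul]
  field_simp
  ring


/-- Sandwich theorem: separate the epigraph of `g` from the strict hypograph of
`γ + φ s - φ`. -/
theorem exists_subgradient_of_forall_sub_le (hbot : ∀ x, g x ≠ ⊥) (hconv : ERealConvexOn g)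
    {φ : E → ℝ} (hφc : Continuous φ) (hφ : ConvexOn ℝ Set.univ φ) {s : E} {γ : ℝ}
    (hs : g s = γ) (hmin : ∀ x, ((γ + φ s - φ x : ℝ) : EReal) ≤ g x) :
    ∃ L : StrongDual ℝ E,
      (∀ x, ((γ + L (x - s) : ℝ) : EReal) ≤ g x) ∧ ∀ x, φ s - L (x - s) ≤ φ x := by
  set H : Set (E × ℝ) := {p | p.2 < γ + φ s - φ p.1}
  have hHconv : Convex ℝ H := by
    convert (hφ.neg.add_const (γ + φ s)).convex_strict_hypograph using 1
    ext p
    simp only [H, Set.mem_ofPred_eq, Set.mem_univ, true_and, Pi.add_apply, Pi.neg_apply]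
    ring_nf
  have hHopen : IsOpen H := isOpen_lt continuous_snd (by fun_prop)
  have hdisj : Disjoint H {p : E × ℝ | g p.1 ≤ p.2} := Set.disjoint_left.2 fun p hpH hpE =>
    (hmin p.1).not_gt (hpE.trans_lt (EReal.coe_lt_coe hpH))
  obtain ⟨f, u, hfH, hfE⟩ := geometric_hahn_banach_open hHconv hHopen hconv.convex_epigraph hdisj
  set r := f (0, 1)
  have hE (x : E) (t : ℝ) (h : g x ≤ t) : u ≤ f (x, 0) + t * r :=
    f.apply_prod_real x t ▸ hfE (x, t) h
  have hH (x : E) (t : ℝ) (h : t < γ + φ s - φ x) : f (x, 0) + t * r < u :=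
    f.apply_prod_real x t ▸ hfH (x, t) h
  have hr : 0 < r := by
    have h₁ := hE s γ hs.le
    have h₂ := hH s (γ - 1) (by linarith)
    linarith
  have hbelow (x : E) : γ + φ s - φ x ≤ (u - f (x, 0)) / r :=
    le_of_forall_lt fun t ht => (lt_div_iff₀ hr).2 (by linarith [hH x t ht])
  have hu : u = f (s, 0) + γ * r := by
    have := hbelow s
    rw [le_div_iff₀ hr] at this
    linarith [hE s γ hs.le]
  set L : StrongDual ℝ E := -r⁻¹ • f.comp (.inl ℝ E ℝ)
  have hL (x : E) : (u - f (x, 0)) / r = γ + L (x - s) := by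
    simp only [L, hu, map_sub, smul_apply, ContinuousLinearMap.comp_apply,
      ContinuousLinearMap.inl_apply, smul_eq_mul]
    field_simp
    ring
  refine ⟨L, fun x => ?_, fun x => by linarith [hbelow x, hL x]⟩
  exact hL x ▸ coe_le_of_forall_mem_epigraph_le hbot f hr (fun p hp => hfE p hp) x


theorem exists_mem_subdiffGraph_of_forall_le_add_dist (hbot : ∀ x, g x ≠ ⊥)
    (hconv : ERealConvexOn g) {δ : ℝ} (hδ : 0 ≤ δ) {s : E} {γ : ℝ} (hs : g s = γ)
    (hmin : ∀ x, g s + ((2⁻¹ * ‖s‖ ^ 2 : ℝ) : EReal) ≤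
      g x + ((2⁻¹ * ‖x‖ ^ 2 : ℝ) : EReal) + ((δ * dist x s : ℝ) : EReal)) :
    ∃ L : StrongDual ℝ E, (s, L) ∈ subdiffGraph g ∧
      2⁻¹ * ‖s‖ ^ 2 + L s + 2⁻¹ * ‖L‖ ^ 2 ≤ 2 * δ * ‖s‖ + 2⁻¹ * δ ^ 2 := by
  set φ : E → ℝ := fun x => 2⁻¹ * ‖x‖ ^ 2 + δ * dist x s
  have hφ : ConvexOn ℝ Set.univ φ :=
    ((convexOn_univ_norm.pow (fun _ _ => norm_nonneg _) 2).smul (by norm_num)).add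
      ((convexOn_dist s convex_univ).smul hδ)
  have hφ_le (x : E) : ((γ + φ s - φ x : ℝ) : EReal) ≤ g x := by
    have := hmin x
    rcases eq_or_ne (g x) ⊤ with htop | htop
    · simp [htop]
    lift g x to ℝ using ⟨htop, hbot x⟩ with y
    rw [hs] at this
    norm_cast at this ⊢
    simp only [φ, dist_self, mul_zero, add_zero]
    linarith
  obtain ⟨L, hLg, hLφ⟩ :=
    exists_subgradient_of_forall_sub_le hbot hconv (by fun_prop) hφ hs hφ_le
  have hnorm : ‖L‖ ≤ ‖s‖ + δ := by
    rw [← norm_neg]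
    refine (-L).opNorm_le_of_le_add_sq (b := 2⁻¹) (by positivity) fun v => ?_
    have h₁ := hLφ (s + v)
    simp only [φ, add_sub_cancel_left, dist_self, dist_self_add_left] at h₁
    have h₂ := norm_add_le s v
    rw [neg_apply]
    nlinarith [norm_nonneg v, norm_nonneg (s + v)]
  have hLs : L s ≤ δ * ‖s‖ - ‖s‖ ^ 2 :=
    le_of_forall_pos_mul_le_add_sq (c := 2⁻¹ * ‖s‖ ^ 2) fun t ht => by
      have h₁ := hLφ ((1 - t) • s)
      have hsub : (1 - t) • s - s = -(t • s) := by module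
      simp only [φ, hsub, dist_eq_norm, sub_self, norm_zero, norm_neg, norm_smul, map_neg,
        map_smul, smul_eq_mul, Real.norm_eq_abs, abs_of_pos ht, mul_pow, sq_abs] at h₁
      linear_combination h₁
  refine ⟨L, mem_subdiffGraph_of_forall_le hs hLg, ?_⟩
  nlinarith [pow_le_pow_left₀ (norm_nonneg L) hnorm 2]

theorem coe_le_add_half_sq_of_affine_le {ℓ : StrongDual ℝ E} {c : ℝ}
    (hℓ : ∀ x, ((ℓ x + c : ℝ) : EReal) ≤ g x) (x : E) :
    ((c - ‖ℓ‖ * ‖x‖ + 2⁻¹ * ‖x‖ ^ 2 : ℝ) : EReal) ≤ g x + ((2⁻¹ * ‖x‖ ^ 2 : ℝ) : EReal) := by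
  have hℓx : -(‖ℓ‖ * ‖x‖) ≤ ℓ x := neg_le_of_abs_le (ℓ.le_opNorm x)
  calc ((c - ‖ℓ‖ * ‖x‖ + 2⁻¹ * ‖x‖ ^ 2 : ℝ) : EReal)
      ≤ ((ℓ x + c : ℝ) : EReal) + ((2⁻¹ * ‖x‖ ^ 2 : ℝ) : EReal) := by
        rw [← EReal.coe_add]
        exact EReal.coe_le_coe_iff.2 (by linarith)
    _ ≤ g x + ((2⁻¹ * ‖x‖ ^ 2 : ℝ) : EReal) := by gcongr; exact hℓ x

end Subdifferential

theorem exists_subdiff_small_general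
    {E : Type*} [NormedAddCommGroup E] [NormedSpace ℝ E] [CompleteSpace E]
    (g : E → EReal) (hproper : ERealProper g) (hconv : ERealConvexOn g)
    (hlsc : LowerSemicontinuous g) (ε : ℝ) (hε : 0 < ε) :
    ∃ p ∈ subdiffGraph g, 2⁻¹ * ‖p.1‖ ^ 2 + p.2 p.1 + 2⁻¹ * ‖p.2‖ ^ 2 < ε := by
  obtain ⟨ℓ, c, hℓ⟩ := hconv.exists_affine_le hlsc hproper
  obtain ⟨hbot, x₀, hx₀⟩ := hproper
  set h : E → EReal := fun x => g x + ((2⁻¹ * ‖x‖ ^ 2 : ℝ) : EReal)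
  have hh_ge := coe_le_add_half_sq_of_affine_le hℓ
  obtain ⟨M, hM⟩ : ∃ M : ℝ, h x₀ = M := ⟨_, (EReal.coe_toReal (EReal.add_ne_top hx₀
    (EReal.coe_ne_top _)) (ne_bot_of_le_ne_bot (EReal.coe_ne_bot _) (hh_ge x₀))).symm⟩
  -- `R` bounds every `x` with `c - ‖ℓ‖ * ‖x‖ + ½‖x‖² ≤ M`, independently of the `δ` chosen below.
  set R := 2 * ‖ℓ‖ + 2 * |M - c| + 2
  have hlim : Tendsto (fun δ : ℝ => 2 * δ * R + 2⁻¹ * δ ^ 2) (𝓝[>] 0) (𝓝 0) :=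
    (Continuous.tendsto' (by fun_prop) 0 0 (by simp)).mono_left nhdsWithin_le_nhds
  obtain ⟨δ, hδε, hδ : 0 < δ⟩ :=
    ((hlim.eventually (gt_mem_nhds hε)).and self_mem_nhdsWithin).exists
  obtain ⟨s, hs₀, hs⟩ := (hlsc.add_coe_real (by fun_prop)).exists_ekeland
    (fun x => (EReal.coe_le_coe_iff.2 (by nlinarith [sq_nonneg (‖x‖ - ‖ℓ‖)])).trans (hh_ge x))
    (hM ▸ EReal.coe_ne_top M) hδ (f := h) (B := c - 2⁻¹ * ‖ℓ‖ ^ 2)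
  rw [hM] at hs₀
  have hsR : ‖s‖ ≤ R := by
    have := EReal.coe_le_coe_iff.1 ((hh_ge s).trans hs₀)
    nlinarith [le_abs_self (M - c), abs_nonneg (M - c), norm_nonneg s, norm_nonneg ℓ]
  have hgs : g s ≠ ⊤ := fun htop => by
    simp only [h, htop, EReal.top_add_coe, top_le_iff, EReal.coe_ne_top] at hs₀
  obtain ⟨γ, hγ⟩ : ∃ γ : ℝ, g s = γ := ⟨_, (EReal.coe_toReal hgs (hbot s)).symm⟩
  obtain ⟨L, hL, hQ⟩ := exists_mem_subdiffGraph_of_forall_le_add_dist hbot hconv hδ.le hγ hs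
  refine ⟨(s, L), hL, hQ.trans_lt (lt_of_le_of_lt ?_ hδε)⟩
  gcongr

/-- If `g` is proper, convex and lower semicontinuous on a nonzero real
Banach space and `ε > 0`, then there is `(s,s*) ∈ G(∂g)` with
`½‖s‖² + ⟨s,s*⟩ + ½‖s*‖² < ε`. -/
theorem exists_subdiff_small
    {E : Type*} [NormedAddCommGroup E] [NormedSpace ℝ E] [CompleteSpace E] [Nontrivial E]
    (g : E → EReal) (hproper : ERealProper g) (hconv : ERealConvexOn g)
    (hlsc : LowerSemicontinuous g) (ε : ℝ) (hε : 0 < ε) :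
    ∃ p ∈ subdiffGraph g, 2⁻¹ * ‖p.1‖ ^ 2 + p.2 p.1 + 2⁻¹ * ‖p.2‖ ^ 2 < ε :=
  exists_subdiff_small_general g hproper hconv hlsc ε hε
end

section
/- Let E be a nonzero real Banach space and f : E → (−∞,∞] be proper, convex and lower semicontinuous. Then G((∂f)^𝔽) ⊆ G(∂(f*)); that is, if (y*,y**) ∈ E* × E** satisfies φ_{∂f}*(y*,y**) = ⟨y*,y**⟩, then f*(y*) + f**(y**) = ⟨y*,y**⟩. -/
/-!
At a point `(s, s*)` of `G(∂f)`, Fenchel–Young gives `⟨s,x*⟩ + ⟨x,s*⟩ − ⟨s,s*⟩ ≤ f(x) + f*(x*)`,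
so `φ_{∂f} ≤ f ⊕ f*` and, conjugating, `f*(y*) + f**(y**) ≤ φ_{∂f}*(y*,y**)`. On the Fitzpatrick
extension the right side is `⟨y*,y**⟩`, and the reverse inequality is Fenchel–Young for `f*`.
The extended-real bookkeeping needs `f** > −∞`, i.e. `f*` finite somewhere: the extension is
empty unless `G(∂f)` is nonempty, and at a point of `G(∂f)` the conjugate is finite.
-/

open NormedSpace Filter

theorem EReal.iSup_add_iSup_le {ι κ : Sort*} {g : ι → EReal} {h : κ → EReal} {c : EReal}
    (H : ∀ i j, g i + h j ≤ c) : (⨆ i, g i) + (⨆ j, h j) ≤ c :=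
  EReal.add_le_of_forall_lt fun _ ha _ hb => by
    obtain ⟨i, hi⟩ := lt_iSup_iff.1 ha
    obtain ⟨j, hj⟩ := lt_iSup_iff.1 hb
    exact (add_le_add hi.le hj.le).trans (H i j)

section Conjugate

variable {X : Type*} [NormedAddCommGroup X] [NormedSpace ℝ X] {f : X → EReal}

theorem sub_le_fnConj (f : X → EReal) (x' : StrongDual ℝ X) (x : X) :
    ((x' x : ℝ) : EReal) - f x ≤ fnConj f x' :=
  le_iSup (fun x => ((x' x : ℝ) : EReal) - f x) x

theorem fnConj_ne_bot (hf : ∃ x, f x ≠ ⊤) (x' : StrongDual ℝ X) : fnConj f x' ≠ ⊥ := by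
  obtain ⟨x, hx⟩ := hf
  refine ne_bot_of_le_ne_bot ?_ (sub_le_fnConj f x' x)
  simpa [sub_eq_add_neg, EReal.add_eq_bot_iff] using hx

theorem le_add_fnConj {x : X} {x' : StrongDual ℝ X} (hx : f x ≠ ⊥) (hx' : fnConj f x' ≠ ⊥) :
    ((x' x : ℝ) : EReal) ≤ f x + fnConj f x' := by
  rw [add_comm, ← EReal.sub_le_iff_le_add (Or.inl hx) (Or.inr hx')]
  exact sub_le_fnConj f x' x

theorem fnConj_ne_top_of_mem_subdiffGraph (hf : ∀ x, f x ≠ ⊥) {p : X × StrongDual ℝ X}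
    (hp : p ∈ subdiffGraph f) : fnConj f p.2 ≠ ⊤ := by
  intro htop
  change f p.1 + fnConj f p.2 = _ at hp
  rw [htop, EReal.add_top_of_ne_bot (hf p.1)] at hp
  exact EReal.top_ne_coe _ hp

end Conjugate

section Fitzpatrick

variable {X : Type*} [NormedAddCommGroup X] [NormedSpace ℝ X]

theorem nonempty_of_mem_fitzExtGraph {A : Set (X × StrongDual ℝ X)}
    {q : StrongDual ℝ X × StrongDual ℝ (StrongDual ℝ X)} (hq : q ∈ fitzExtGraph A) :
    A.Nonempty := by
  rw [Set.nonempty_iff_ne_empty]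
  rintro rfl
  simp [fitzExtGraph, pairConj, fitzFn] at hq

variable {f : X → EReal}

theorem fitzFn_subdiffGraph_le (hf : ERealProper f) (p : X × StrongDual ℝ X) :
    fitzFn (subdiffGraph f) p ≤ f p.1 + fnConj f p.2 := by
  refine iSup_le fun ⟨s, hs⟩ => ?_
  have hconj := fnConj_ne_bot hf.2
  rw [EReal.coe_sub, EReal.sub_le_iff_le_add (Or.inl (EReal.coe_ne_bot _))
    (Or.inl (EReal.coe_ne_top _)), ← hs, EReal.coe_add]
  calc ((p.2 s.1 : ℝ) : EReal) + ((s.2 p.1 : ℝ) : EReal)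
      ≤ (f s.1 + fnConj f p.2) + (f p.1 + fnConj f s.2) :=
        add_le_add (le_add_fnConj (hf.1 _) (hconj _)) (le_add_fnConj (hf.1 _) (hconj _))
    _ = (f p.1 + fnConj f p.2) + (f s.1 + fnConj f s.2) := by abel

theorem fnConj_add_fnConj_fnConj_le_pairConj (hf : ERealProper f)
    (q : StrongDual ℝ X × StrongDual ℝ (StrongDual ℝ X)) :
    fnConj f q.1 + fnConj (fnConj f) q.2 ≤ pairConj (fitzFn (subdiffGraph f)) q :=
  EReal.iSup_add_iSup_le fun x x' =>
    calc (((q.1 x : ℝ) : EReal) - f x) + (((q.2 x' : ℝ) : EReal) - fnConj f x')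
        = ((q.1 x + q.2 x' : ℝ) : EReal) - (f x + fnConj f x') := by
          rw [sub_eq_add_neg, sub_eq_add_neg, sub_eq_add_neg,
            EReal.neg_add (Or.inl (hf.1 x)) (Or.inr (fnConj_ne_bot hf.2 x')), EReal.coe_add]
          exact add_add_add_comm ..
      _ ≤ ((q.1 x + q.2 x' : ℝ) : EReal) - fitzFn (subdiffGraph f) (x, x') :=
          EReal.sub_le_sub le_rfl (fitzFn_subdiffGraph_le hf (x, x'))
      _ ≤ pairConj (fitzFn (subdiffGraph f)) q :=
          le_iSup (fun p : X × StrongDual ℝ X =>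
            ((q.1 p.1 + q.2 p.2 : ℝ) : EReal) - fitzFn (subdiffGraph f) p) (x, x')

end Fitzpatrick

theorem fitzExtGraph_subdiff_subset_subdiff_conj_general
    {E : Type*} [NormedAddCommGroup E] [NormedSpace ℝ E]
    (f : E → EReal) (hproper : ERealProper f) :
    fitzExtGraph (subdiffGraph f) ⊆ subdiffGraph (fnConj f) := by
  intro q hq
  obtain ⟨p, hp⟩ := nonempty_of_mem_fitzExtGraph hq
  have hbiconj : fnConj (fnConj f) q.2 ≠ ⊥ :=
    fnConj_ne_bot ⟨p.2, fnConj_ne_top_of_mem_subdiffGraph hproper.1 hp⟩ q.2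
  exact le_antisymm ((fnConj_add_fnConj_fnConj_le_pairConj hproper q).trans hq.le)
    (le_add_fnConj (fnConj_ne_bot hproper.2 q.1) hbiconj)

/-- For proper convex lower semicontinuous `f`,
`G((∂f)^𝔽) ⊆ G(∂(f*))`. -/
theorem fitzExtGraph_subdiff_subset_subdiff_conj
    {E : Type*} [NormedAddCommGroup E] [NormedSpace ℝ E] [CompleteSpace E] [Nontrivial E]
    (f : E → EReal) (hproper : ERealProper f) (hconv : ERealConvexOn f)
    (hlsc : LowerSemicontinuous f) :
    fitzExtGraph (subdiffGraph f) ⊆ subdiffGraph (fnConj f) :=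
  fitzExtGraph_subdiff_subset_subdiff_conj_general f hproper
end

section
/- Let E be a nonzero real Banach space, g : E* × E** → (−∞,∞] be proper, convex and lower semicontinuous, and suppose g(y*,y**) ≥ ⟨y*,y**⟩ for all (y*,y**) ∈ E* × E**. If (z*,z**) ∈ E* × E** satisfies g(z*,z**) = ⟨z*,z**⟩, then g*(z**, ẑ*) = ⟨z*,z**⟩, where g* is the Fenchel conjugate of g on E** × E*** and ẑ* is the canonical image of z* in E***. -/
open NormedSpace Filter

/-! A convex `g` lying above a quadratic form `Q` and touching it at `w` has `Q` as a lower
bound along every segment `[w, p]`. Expanding `Q((1-t)w + tp)`, dividing by `t` and letting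
`t → 0⁺` gives the tangent inequality `polar Q w p - Q w ≤ g p`, i.e. `g*` at the point dual to
`w` is at most `Q w`; the reverse inequality comes from testing the supremum at `w` itself. -/

open QuadraticMap

theorem QuadraticMap.map_smul_add_smul {R M : Type*} [CommRing R] [AddCommGroup M] [Module R M]
    (Q : QuadraticMap R M R) (a b : R) (x y : M) :
    Q (a • x + b • y) = a * a * Q x + a * b * polar Q x y + b * b * Q y := by
  rw [QuadraticMap.map_add Q, Q.map_smul, Q.map_smul, polar_smul_left, polar_smul_right]
  simp only [smul_eq_mul]
  ring

theorem le_of_forall_mem_Ioo_one_sub_mul_add_mul_le {x y r : ℝ}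
    (h : ∀ t ∈ Set.Ioo (0 : ℝ) 1, (1 - t) * x + t * y ≤ r) : x ≤ r := by
  have hlim : Tendsto (fun t : ℝ => (1 - t) * x + t * y) (nhdsWithin 0 (Set.Ioi 0)) (nhds x) :=
    ((by fun_prop : Continuous fun t : ℝ => (1 - t) * x + t * y).tendsto' 0 x (by ring)).mono_left
      nhdsWithin_le_nhds
  refine le_of_tendsto hlim ?_
  filter_upwards [Ioo_mem_nhdsGT (zero_lt_one' ℝ)] with t ht using h t ht

theorem polar_sub_le_of_eRealConvexOn_of_le {V : Type*} [AddCommGroup V] [Module ℝ V]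
    (Q : QuadraticForm ℝ V) {f : V → EReal} (hconv : ERealConvexOn f)
    (hge : ∀ v, (Q v : EReal) ≤ f v) {w : V} (hw : f w = Q w) (p : V) :
    ((polar Q w p : ℝ) : EReal) - f p ≤ Q w := by
  by_cases htop : f p = ⊤
  · rw [htop, EReal.sub_top]
    exact bot_le
  set r := (f p).toReal
  have hr : f p = r :=
    (EReal.coe_toReal htop (ne_bot_of_le_ne_bot (EReal.coe_ne_bot _) (hge p))).symm
  have hsegment : ∀ t ∈ Set.Ioo (0 : ℝ) 1, (1 - t) * (polar Q w p - Q w) + t * Q p ≤ r := by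
    intro t ⟨ht0, ht1⟩
    have hle : Q ((1 - t) • w + t • p) ≤ (1 - t) * Q w + t * r := by
      have := (hge _).trans (hconv w p (1 - t) t (by linarith) ht0.le (by ring))
      rwa [hw, hr, ← EReal.coe_mul, ← EReal.coe_mul, ← EReal.coe_add, EReal.coe_le_coe_iff] at this
    rw [Q.map_smul_add_smul] at hle
    nlinarith
  rw [hr, ← EReal.coe_sub, EReal.coe_le_coe_iff]
  linarith [le_of_forall_mem_Ioo_one_sub_mul_add_mul_le hsegment]

noncomputable def dualPairingForm (X : Type*) [NormedAddCommGroup X] [NormedSpace ℝ X] :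
    QuadraticForm ℝ (X × StrongDual ℝ X) :=
  LinearMap.BilinMap.toQuadraticMap <| LinearMap.mk₂ ℝ (fun p q => p.2 q.1)
    (fun _ _ _ => rfl) (fun _ _ _ => rfl) (fun _ _ _ => map_add _ _ _) (fun _ _ _ => map_smul _ _ _)

theorem polar_dualPairingForm {X : Type*} [NormedAddCommGroup X] [NormedSpace ℝ X]
    (p q : X × StrongDual ℝ X) : polar (dualPairingForm X) p q = p.2 q.1 + q.2 p.1 :=
  LinearMap.BilinMap.polar_toQuadraticMap p q

theorem conj_pairing_of_eq_pairing_general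
    {E : Type*} [NormedAddCommGroup E] [NormedSpace ℝ E]
    (g : StrongDual ℝ E × StrongDual ℝ (StrongDual ℝ E) → EReal)
    (hconv : ERealConvexOn g)
    (hge : ∀ q : StrongDual ℝ E × StrongDual ℝ (StrongDual ℝ E), ((q.2 q.1 : ℝ) : EReal) ≤ g q)
    (z' : StrongDual ℝ E) (z'' : StrongDual ℝ (StrongDual ℝ E))
    (hz : g (z', z'') = ((z'' z' : ℝ) : EReal)) :
    pairConj g (z'', inclusionInDoubleDual ℝ (StrongDual ℝ E) z') = ((z'' z' : ℝ) : EReal) := by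
  have hpairing (p : StrongDual ℝ E × StrongDual ℝ (StrongDual ℝ E)) :
      z'' p.1 + inclusionInDoubleDual ℝ (StrongDual ℝ E) z' p.2
        = polar (dualPairingForm (StrongDual ℝ E)) (z', z'') p := by
    rw [polar_dualPairingForm, dual_def, add_comm]
  refine le_antisymm (iSup_le fun p => ?_) ?_
  · rw [hpairing]
    exact polar_sub_le_of_eRealConvexOn_of_le (dualPairingForm _) hconv hge hz p
  · refine le_iSup_of_le (z', z'') ?_
    rw [hpairing, hz, ← EReal.coe_sub, polar_dualPairingForm]
    exact EReal.coe_le_coe_iff.mpr (by linarith)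

/-- If `g : E* × E** → (−∞,∞]` is proper, convex, lower semicontinuous,
dominates the duality pairing, and `g(z*,z**) = ⟨z*,z**⟩`, then
`g*(z**, ẑ*) = ⟨z*,z**⟩`. -/
theorem conj_pairing_of_eq_pairing
    {E : Type*} [NormedAddCommGroup E] [NormedSpace ℝ E] [CompleteSpace E] [Nontrivial E]
    (g : StrongDual ℝ E × StrongDual ℝ (StrongDual ℝ E) → EReal)
    (hproper : ERealProper g) (hconv : ERealConvexOn g) (hlsc : LowerSemicontinuous g)
    (hge : ∀ q : StrongDual ℝ E × StrongDual ℝ (StrongDual ℝ E), ((q.2 q.1 : ℝ) : EReal) ≤ g q)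
    (z' : StrongDual ℝ E) (z'' : StrongDual ℝ (StrongDual ℝ E))
    (hz : g (z', z'') = ((z'' z' : ℝ) : EReal)) :
    pairConj g (z'', inclusionInDoubleDual ℝ (StrongDual ℝ E) z') = ((z'' z' : ℝ) : EReal) :=
  conj_pairing_of_eq_pairing_general g hconv hge z' z'' hz
end
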